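/- arXiv:2209.07312 — 4 statements merged into one kernel-verified Lean document; each statement's English description precedes it below -/
import Mathlib

section
/- If (h, λ) is a v-approximate minimax solution to the Λ-bounded Lagrangian problem with bound C (i.e., L_f(h,λ) ≤ min_{h'} L_f(h',λ) + v and L_f(h,λ) ≥ max_{λ'∈Λ} L_f(h,λ') − v, where Λ = {λ : ‖λ‖₁ ≤ C}), and OPT is the optimal objective value of the constrained LP ψ(f,γ,H_A), then err(h) ≤ OPT + 2v and for every group g, w_g|ρ_g(h) − ρ(h)| ≤ γ + (1+2v)/C. -/
/-- Objective (expected 0-1 error measured with regression function `f`) of a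
randomized classifier `q : X → [0,1]` (`q x` = probability of predicting 1). -/
def objLP {X : Type*} [Fintype X] (DX f : X → ℝ) (q : X → ℝ) : ℝ :=
  ∑ x, DX x * (f x * (1 - q x) + (1 - f x) * q x)

/-- Signed fairness-constraint value for group `i`:
`E[ℓ(h(x),0)g(x)(1−f(x))] − β_g E[ℓ(h(x),0)(1−f(x))]`. -/
def violLP {X ι : Type*} [Fintype X] (DX f : X → ℝ) (grp : ι → X → Bool)
    (β : ι → ℝ) (q : X → ℝ) (i : ι) : ℝ :=
  (∑ x, DX x * (q x * (if grp i x then (1:ℝ) else 0) * (1 - f x)))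
    - β i * (∑ x, DX x * (q x * (1 - f x)))

/-- Lagrangian of the LP `ψ(f,γ,H_A)` with dual variables `lp, lm ≥ 0`. -/
def LagLP {X ι : Type*} [Fintype X] [Fintype ι] (DX f : X → ℝ) (grp : ι → X → Bool)
    (β : ι → ℝ) (γ : ℝ) (q : X → ℝ) (lp lm : ι → ℝ) : ℝ :=
  objLP DX f q + ∑ i, lp i * (violLP DX f grp β q i - γ)
    + ∑ i, lm i * (-(violLP DX f grp β q i) - γ)

/-- Theorem of Kearns et al.: a `v`-approximate minimax solution of
the `Λ`-bounded Lagrangian problem (with `Λ = {λ : ‖λ‖₁ ≤ C}`) yields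
`err(h) ≤ OPT + 2v` and, for every group, fairness violation at most
`γ + (1+2v)/C`. -/
theorem approx_minimax_implies_approx_LP
    {X ι : Type*} [Fintype X] [Fintype ι]
    (DX f : X → ℝ) (grp : ι → X → Bool) (β : ι → ℝ) (γ C v OPT : ℝ)
    (hDX : ∀ x, 0 ≤ DX x) (hDXsum : ∑ x, DX x = 1)
    (hf : ∀ x, f x ∈ Set.Icc (0:ℝ) 1) (hβ : ∀ i, β i ∈ Set.Icc (0:ℝ) 1)
    (hγ : 0 ≤ γ) (hC : 0 < C) (hv : 0 ≤ v)
    (q : X → ℝ) (lp lm : ι → ℝ)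
    (hq : ∀ x, q x ∈ Set.Icc (0:ℝ) 1)
    (hlp : ∀ i, 0 ≤ lp i) (hlm : ∀ i, 0 ≤ lm i)
    (hlamC : ∑ i, (lp i + lm i) ≤ C)
    (hOPT : IsLeast
      {E : ℝ | ∃ q' : X → ℝ, (∀ x, q' x ∈ Set.Icc (0:ℝ) 1) ∧
        (∀ i, |violLP DX f grp β q' i| ≤ γ) ∧ objLP DX f q' = E} OPT)
    (hprimal : ∀ q' : X → ℝ, (∀ x, q' x ∈ Set.Icc (0:ℝ) 1) →
      LagLP DX f grp β γ q lp lm ≤ LagLP DX f grp β γ q' lp lm + v)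
    (hdual : ∀ lp' lm' : ι → ℝ, (∀ i, 0 ≤ lp' i) → (∀ i, 0 ≤ lm' i) →
      (∑ i, (lp' i + lm' i)) ≤ C →
      LagLP DX f grp β γ q lp' lm' - v ≤ LagLP DX f grp β γ q lp lm) :
    objLP DX f q ≤ OPT + 2 * v ∧
      ∀ i, |violLP DX f grp β q i| ≤ γ + (1 + 2 * v) / C := by

  classical
  obtain ⟨⟨qs, hqs, hqsfeas, hqsobj⟩, hlb⟩ := hOPT
  set L := LagLP DX f grp β γ q lp lm with hLdef
  -- L ≤ OPT + v
  have hLle : L ≤ OPT + v := by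
    have h := hprimal qs hqs
    have h1 : ∑ i, lp i * (violLP DX f grp β qs i - γ) ≤ 0 :=
      Finset.sum_nonpos fun i _ => mul_nonpos_of_nonneg_of_nonpos (hlp i)
        (by linarith [(abs_le.mp (hqsfeas i)).2])
    have h2 : ∑ i, lm i * (-(violLP DX f grp β qs i) - γ) ≤ 0 :=
      Finset.sum_nonpos fun i _ => mul_nonpos_of_nonneg_of_nonpos (hlm i)
        (by linarith [(abs_le.mp (hqsfeas i)).1])
    have hqsL : LagLP DX f grp β γ qs lp lm ≤ OPT := by
      rw [LagLP, hqsobj]; linarith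
    linarith
  -- obj(q) - v ≤ L
  have hobjL : objLP DX f q - v ≤ L := by
    have h := hdual (fun _ => 0) (fun _ => 0) (fun _ => le_refl 0) (fun _ => le_refl 0)
      (by simpa using hC.le)
    simpa [LagLP] using h
  have hOPTle1 : OPT ≤ 1 := by
    rw [← hqsobj]
    have : ∀ x, DX x * (f x * (1 - qs x) + (1 - f x) * qs x) ≤ DX x * 1 := by
      intro x
      have hfx := hf x; have hqx := hqs x
      simp only [Set.mem_Icc] at hfx hqx
      apply mul_le_mul_of_nonneg_left _ (hDX x)
      nlinarith [hfx.1, hfx.2, hqx.1, hqx.2]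
    calc objLP DX f qs ≤ ∑ x, DX x * 1 := Finset.sum_le_sum fun x _ => this x
      _ = 1 := by simp [hDXsum]
  have hobj0 : 0 ≤ objLP DX f q := by
    apply Finset.sum_nonneg
    intro x _
    have hfx := hf x; have hqx := hq x
    simp only [Set.mem_Icc] at hfx hqx
    apply mul_nonneg (hDX x)
    nlinarith [hfx.1, hfx.2, hqx.1, hqx.2]
  constructor
  · linarith
  · intro i
    -- plus direction
    have hplus : objLP DX f q + C * (violLP DX f grp β q i - γ) - v ≤ L := by
      have h := hdual (fun j => if j = i then C else 0) (fun _ => 0)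
        (fun j => by positivity) (fun _ => le_refl 0)
        (by simp)
      simpa [LagLP, ite_mul, Finset.sum_ite_eq'] using h
    have hminus : objLP DX f q + C * (-(violLP DX f grp β q i) - γ) - v ≤ L := by
      have h := hdual (fun _ => 0) (fun j => if j = i then C else 0)
        (fun _ => le_refl 0) (fun j => by positivity)
        (by simp)
      simpa [LagLP, ite_mul, Finset.sum_ite_eq'] using h
    rw [abs_le]
    constructor
    · have : (-(violLP DX f grp β q i) - γ) * C ≤ 1 + 2 * v := by nlinarith
      have h2 : -(violLP DX f grp β q i) - γ ≤ (1 + 2 * v) / C := (le_div_iff₀ hC).mpr this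
      linarith
    · have : (violLP DX f grp β q i - γ) * C ≤ 1 + 2 * v := by nlinarith
      have h2 : violLP DX f grp β q i - γ ≤ (1 + 2 * v) / C := (le_div_iff₀ hC).mpr this
      linarith
end

section
/- Fix λ with ‖λ‖₁ ≤ C. If the regression function f̂ is α-approximately multicalibrated in expectation with respect to G, H, and the product class G×H = {g·h : g ∈ G, h ∈ H}, then for any h* ∈ H, |L_{f̂}(h*, λ) − L_{f*}(h*, λ)| ≤ α(3 + 2‖λ‖₁). -/
open Finset in
/-- Multicalibration-in-expectation error of `fhat` (with Bayes regression
function `fstar`) with respect to a single real-valued test function `c`, over a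
finite feature space with marginal weights `DX`:
`Σ_{v} |Σ_{x : fhat x = v} DX x · (fhat x − fstar x) · c x|`
(which equals `Σ_v Pr[fhat = v]·|E[(fhat − fstar)·c | fhat = v]|`). -/
noncomputable def mcErr {X : Type*} [Fintype X] (DX fhat fstar : X → ℝ) (c : X → ℝ) : ℝ :=
  ∑ v ∈ Finset.univ.image fhat,
    |∑ x ∈ Finset.univ.filter (fun x => fhat x = v), DX x * (fhat x - fstar x) * c x|

/-- The Lagrangian `L_f(h, λ)` in expanded form (Lemma `expandedLag`). -/
def LagExp {X ι : Type*} [Fintype X] [Fintype ι]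
    (DX f : X → ℝ) (grp : ι → X → Bool) (β : ι → ℝ) (γ : ℝ)
    (h : X → Bool) (lp lm : ι → ℝ) : ℝ :=
  ∑ x, DX x *
    ((if h x then (1:ℝ) else 0) *
        (1 + ∑ i, (lp i - lm i) * ((if grp i x then (1:ℝ) else 0) - β i))
      - γ * ∑ i, (lp i + lm i)
      - f x * (-(if h x then (0:ℝ) else 1)
          + (if h x then (1:ℝ) else 0) *
            (1 + ∑ i, (lp i - lm i) * ((if grp i x then (1:ℝ) else 0) - β i))))

/-- if `fhat` is `α`-approximately multicalibrated in expectation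
with respect to the groups `G` (including the all-ones group `I`), the model
`h*`, and the product class `G × H`, then for any dual vector `λ`,
`|L_{fhat}(h*, λ) − L_{fstar}(h*, λ)| ≤ α(3 + 2‖λ‖₁)`. -/
theorem lagrangian_closeness_of_multicalibration
    {X ι : Type*} [Fintype X] [Fintype ι]
    (DX fhat fstar : X → ℝ) (grp : ι → X → Bool) (β : ι → ℝ) (γ α C : ℝ)
    (hstar : X → Bool) (lp lm : ι → ℝ)
    (hDX : ∀ x, 0 ≤ DX x) (hDXsum : ∑ x, DX x = 1)
    (hβ : ∀ i, β i ∈ Set.Icc (0:ℝ) 1)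
    (hfhat : ∀ x, fhat x ∈ Set.Icc (0:ℝ) 1) (hfstar : ∀ x, fstar x ∈ Set.Icc (0:ℝ) 1)
    (hα : 0 ≤ α)
    (hlp : ∀ i, 0 ≤ lp i) (hlm : ∀ i, 0 ≤ lm i)
    (hlamC : ∑ i, (lp i + lm i) ≤ C)
    (hmcI : mcErr DX fhat fstar (fun _ => (1:ℝ)) ≤ α)
    (hmcG : ∀ i, mcErr DX fhat fstar (fun x => if grp i x then (1:ℝ) else 0) ≤ α)
    (hmcH : mcErr DX fhat fstar (fun x => if hstar x then (1:ℝ) else 0) ≤ α)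
    (hmcGH : ∀ i, mcErr DX fhat fstar
      (fun x => (if grp i x then (1:ℝ) else 0) * (if hstar x then (1:ℝ) else 0)) ≤ α) :
    |LagExp DX fhat grp β γ hstar lp lm - LagExp DX fstar grp β γ hstar lp lm|
      ≤ α * (3 + 2 * ∑ i, (lp i + lm i)) := by
  classical
  set S : (X → ℝ) → ℝ := fun c => ∑ x, DX x * (fhat x - fstar x) * c x with hSdef
  have hSle : ∀ c, |S c| ≤ mcErr DX fhat fstar c := by
    intro c
    have hfib : (∑ v ∈ Finset.univ.image fhat,
        ∑ x ∈ Finset.univ.filter (fun x => fhat x = v),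
          DX x * (fhat x - fstar x) * c x) = S c :=
      Finset.sum_fiberwise_of_maps_to
        (fun x _ => Finset.mem_image_of_mem fhat (Finset.mem_univ x)) _
    rw [mcErr, ← hfib]
    exact Finset.abs_sum_le_sum_abs _ _
  set H : X → ℝ := fun x => if hstar x then (1:ℝ) else 0 with hHdef
  set GH : ι → X → ℝ := fun i x => (if grp i x then (1:ℝ) else 0) * H x with hGHdef
  have swap : ∑ i, (lp i - lm i) * (S (GH i) - β i * S H)
      = ∑ x, (DX x * (fhat x - fstar x)) * H x *
          ∑ i, (lp i - lm i) * ((if grp i x then (1:ℝ) else 0) - β i) := by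
    simp only [hSdef, hGHdef, Finset.mul_sum, ← Finset.sum_sub_distrib]
    rw [Finset.sum_comm]
    refine Finset.sum_congr rfl fun x _ => ?_
    refine Finset.sum_congr rfl fun i _ => ?_
    ring
  have e1 : LagExp DX fhat grp β γ hstar lp lm - LagExp DX fstar grp β γ hstar lp lm
      = ∑ x, DX x * (fstar x - fhat x) *
          ((2 * H x - 1) + H x *
            ∑ i, (lp i - lm i) * ((if grp i x then (1:ℝ) else 0) - β i)) := by
    simp only [LagExp, ← Finset.sum_sub_distrib]
    refine Finset.sum_congr rfl fun x _ => ?_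
    by_cases hx : hstar x <;> simp [hHdef, hx] <;> ring
  have e2 : -(2 * S H - S (fun _ => (1:ℝ))
        + ∑ x, (DX x * (fhat x - fstar x)) * H x *
            ∑ i, (lp i - lm i) * ((if grp i x then (1:ℝ) else 0) - β i))
      = ∑ x, DX x * (fstar x - fhat x) *
          ((2 * H x - 1) + H x *
            ∑ i, (lp i - lm i) * ((if grp i x then (1:ℝ) else 0) - β i)) := by
    simp only [hSdef]
    rw [Finset.mul_sum, ← Finset.sum_sub_distrib, ← Finset.sum_add_distrib,
      ← Finset.sum_neg_distrib]
    refine Finset.sum_congr rfl fun x _ => ?_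
    ring
  have hdiff : LagExp DX fhat grp β γ hstar lp lm - LagExp DX fstar grp β γ hstar lp lm
      = -(2 * S H - S (fun _ => (1:ℝ))
          + ∑ i, (lp i - lm i) * (S (GH i) - β i * S H)) := by
    rw [swap, e2, e1]
  rw [hdiff, abs_neg]
  have h1 : |S H| ≤ α := (hSle H).trans hmcH
  have h2 : |S (fun _ => (1:ℝ))| ≤ α := (hSle _).trans hmcI
  have h3 : ∀ i, |S (GH i)| ≤ α := fun i => (hSle _).trans (hmcGH i)
  have hterm : ∀ i, |(lp i - lm i) * (S (GH i) - β i * S H)| ≤ (lp i + lm i) * (2 * α) := by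
    intro i
    rw [abs_mul]
    have hβi := hβ i
    have habs1 : |lp i - lm i| ≤ lp i + lm i := by
      rw [abs_sub_le_iff]
      constructor <;> nlinarith [hlp i, hlm i]
    have habs2 : |S (GH i) - β i * S H| ≤ 2 * α := by
      refine (abs_sub (S (GH i)) (β i * S H)).trans ?_
      have : |β i * S H| ≤ α := by
        rw [abs_mul, abs_of_nonneg hβi.1]
        nlinarith [abs_nonneg (S H), hβi.2, h1]
      nlinarith [h3 i]
    have h0 : (0:ℝ) ≤ |lp i - lm i| := abs_nonneg _
    have h0' : (0:ℝ) ≤ |S (GH i) - β i * S H| := abs_nonneg _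
    nlinarith
  have hsum : |∑ i, (lp i - lm i) * (S (GH i) - β i * S H)|
      ≤ (∑ i, (lp i + lm i)) * (2 * α) := by
    refine (Finset.abs_sum_le_sum_abs _ _).trans ?_
    rw [Finset.sum_mul]
    exact Finset.sum_le_sum fun i _ => hterm i
  calc |2 * S H - S (fun _ => (1:ℝ)) + ∑ i, (lp i - lm i) * (S (GH i) - β i * S H)|
      ≤ |2 * S H - S (fun _ => (1:ℝ))| + |∑ i, (lp i - lm i) * (S (GH i) - β i * S H)| :=
        abs_add_le _ _
    _ ≤ (2 * |S H| + |S (fun _ => (1:ℝ))|)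
        + (∑ i, (lp i + lm i)) * (2 * α) := by
        refine add_le_add ?_ hsum
        refine (abs_sub _ _).trans ?_
        rw [abs_mul, abs_two]
    _ ≤ α * (3 + 2 * ∑ i, (lp i + lm i)) := by
        have hL : (0:ℝ) ≤ ∑ i, (lp i + lm i) :=
          Finset.sum_nonneg fun i _ => by nlinarith [hlp i, hlm i]
        nlinarith [h1, h2]
end

section
/- Let h_t(x) = s_λ(x, f̂(x)) be a classifier that thresholds f̂ according to a two-argument Boolean function s_λ : X × R → {0,1} (i.e., h_t(x)=1 iff s_λ(x,f̂(x))=1). If f̂ is α-approximately jointly multicalibrated with respect to s_λ, then |err̂(h_t) − err(h_t)| ≤ 2α, where err̂(h) = E_x[f̂(x)ℓ(h(x),1)+(1−f̂(x))ℓ(h(x),0)] and err(h) = E_x[f*(x)ℓ(h(x),1)+(1−f*(x))ℓ(h(x),0)]. -/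
open Finset in
/-- Joint multicalibration-in-expectation error of `fhat` (with Bayes regression
function `fstar`) with respect to a two-argument test function `s : X × R → Bool`
and outcome `b`:
`Σ_v |Σ_{x : fhat x = v ∧ s x v = b} DX x · (fhat x − fstar x)|`. -/
noncomputable def jointMCErr {X : Type*} [Fintype X] (DX fhat fstar : X → ℝ)
    (s : X → ℝ → Bool) (b : Bool) : ℝ :=
  ∑ v ∈ Finset.univ.image fhat,
    |∑ x ∈ Finset.univ.filter (fun x => fhat x = v ∧ s x v = b),
      DX x * (fhat x - fstar x)|

open Finset in
lemma fiber_split {X : Type*} [Fintype X] (fhat : X → ℝ) (s : X → ℝ → Bool)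
    (g : X → ℝ) (b : Bool) :
    ∑ v ∈ Finset.univ.image fhat,
      ∑ x ∈ Finset.univ.filter (fun x => fhat x = v ∧ s x v = b), g x
    = ∑ x ∈ Finset.univ.filter (fun x => s x (fhat x) = b), g x := by
  simp only [Finset.sum_filter]
  rw [Finset.sum_comm]
  refine Finset.sum_congr rfl fun x _ => ?_
  have hx : fhat x ∈ Finset.univ.image fhat := Finset.mem_image_of_mem _ (mem_univ x)
  rw [Finset.sum_eq_single (fhat x)]
  · simp
  · intro v _ hv
    exact if_neg (fun h => hv h.1.symm)
  · intro h; exact absurd hx h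

/-- if `h_t(x) = s_λ(x, fhat(x))` thresholds `fhat` via a
two-argument Boolean function with respect to which `fhat` is `α`-approximately
jointly multicalibrated (for both conditioning outcomes `b`), then the estimated
error `err̂` and the true error `err` of `h_t` differ by at most `2α`. -/
theorem estimated_error_close_to_true_error
    {X : Type*} [Fintype X]
    (DX fhat fstar : X → ℝ) (s : X → ℝ → Bool) (α : ℝ)
    (hDX : ∀ x, 0 ≤ DX x) (hDXsum : ∑ x, DX x = 1)
    (hfhat : ∀ x, fhat x ∈ Set.Icc (0:ℝ) 1) (hfstar : ∀ x, fstar x ∈ Set.Icc (0:ℝ) 1)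
    (hα : 0 ≤ α)
    (hjmc : ∀ b : Bool, jointMCErr DX fhat fstar s b ≤ α) :
    |(∑ x, DX x * (fhat x * (if s x (fhat x) then (0:ℝ) else 1)
          + (1 - fhat x) * (if s x (fhat x) then (1:ℝ) else 0)))
      - (∑ x, DX x * (fstar x * (if s x (fhat x) then (0:ℝ) else 1)
          + (1 - fstar x) * (if s x (fhat x) then (1:ℝ) else 0)))| ≤ 2 * α := by
  classical
  set g : X → ℝ := fun x => DX x * (fhat x - fstar x) with hg
  have key : ∀ b : Bool,
      |∑ x ∈ Finset.univ.filter (fun x => s x (fhat x) = b), g x| ≤ α := by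
    intro b
    calc |∑ x ∈ Finset.univ.filter (fun x => s x (fhat x) = b), g x|
        = |∑ v ∈ Finset.univ.image fhat,
            ∑ x ∈ Finset.univ.filter (fun x => fhat x = v ∧ s x v = b), g x| := by
          rw [fiber_split]
      _ ≤ ∑ v ∈ Finset.univ.image fhat,
            |∑ x ∈ Finset.univ.filter (fun x => fhat x = v ∧ s x v = b), g x| :=
          Finset.abs_sum_le_sum_abs _ _
      _ ≤ α := hjmc b
  have hdiff :
      (∑ x, DX x * (fhat x * (if s x (fhat x) then (0:ℝ) else 1)
          + (1 - fhat x) * (if s x (fhat x) then (1:ℝ) else 0)))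
      - (∑ x, DX x * (fstar x * (if s x (fhat x) then (0:ℝ) else 1)
          + (1 - fstar x) * (if s x (fhat x) then (1:ℝ) else 0)))
      = (∑ x ∈ Finset.univ.filter (fun x => s x (fhat x) = false), g x)
        - (∑ x ∈ Finset.univ.filter (fun x => s x (fhat x) = true), g x) := by
    rw [← Finset.sum_sub_distrib, Finset.sum_filter, Finset.sum_filter,
      ← Finset.sum_sub_distrib]
    refine Finset.sum_congr rfl fun x _ => ?_
    rcases Bool.eq_false_or_eq_true (s x (fhat x)) with h | h <;> simp [h, hg] <;> ring
  rw [hdiff]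
  calc |(∑ x ∈ Finset.univ.filter (fun x => s x (fhat x) = false), g x)
        - (∑ x ∈ Finset.univ.filter (fun x => s x (fhat x) = true), g x)|
      ≤ |∑ x ∈ Finset.univ.filter (fun x => s x (fhat x) = false), g x|
        + |∑ x ∈ Finset.univ.filter (fun x => s x (fhat x) = true), g x| :=
        abs_sub _ _
    _ ≤ α + α := add_le_add (key false) (key true)
    _ = 2 * α := by ring
end

section
/- In the multicalibration algorithm, updating a set S on which the predictor has value v to the conditional mean decreases squared error: if ṽ = E[y | x ∈ S] and p = Pr[x ∈ S], then E[(y−ṽ)² − (y−v)² ; x∈S] = −p·(v − ṽ)². Consequently if p·(v−ṽ)² ≥ α/(m+1), then B(f̃) − B(f) ≤ −α/(m+1), where f̃ replaces the value v with ṽ on S. -/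
open Finset in
/-- updating a set `S` (on which the predictor has value `v`) to
the conditional mean `ṽ = E[y | x ∈ S]` decreases squared error:
`E[(y−ṽ)² − (y−v)² ; x∈S] = −p·(v−ṽ)²` where `p = Pr[x∈S]`, and hence if
`p·(v−ṽ)² ≥ α/(m+1)` then `B(f̃) − B(f) ≤ −α/(m+1)`. -/
theorem conditional_mean_update_decreases_potential
    {X : Type*} [Fintype X] [DecidableEq X]
    (D : X → Bool → ℝ) (hD : ∀ x y, 0 ≤ D x y)
    (hsum : ∑ x, (D x false + D x true) = 1)
    (S : Finset X) (m : ℕ) (α v : ℝ) (hv0 : 0 ≤ v) (hv1 : v ≤ 1)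
    (hPrS : 0 < ∑ x ∈ S, (D x false + D x true))
    (vtil : ℝ)
    (hvtil : vtil = (∑ x ∈ S, D x true) / (∑ x ∈ S, (D x false + D x true)))
    (f ftil : X → ℝ)
    (hon : ∀ x ∈ S, f x = v ∧ ftil x = vtil)
    (hoff : ∀ x ∉ S, ftil x = f x) :
    (∑ x ∈ S, (D x false * ((0 - vtil)^2 - (0 - v)^2)
        + D x true * ((1 - vtil)^2 - (1 - v)^2)))
      = -((∑ x ∈ S, (D x false + D x true)) * (v - vtil)^2)
    ∧ (α / (m + 1) ≤ (∑ x ∈ S, (D x false + D x true)) * (v - vtil)^2 →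
        (∑ x, (D x false * (0 - ftil x)^2 + D x true * (1 - ftil x)^2))
          - (∑ x, (D x false * (0 - f x)^2 + D x true * (1 - f x)^2))
        ≤ -(α / (m + 1))) := by
  set p := ∑ x ∈ S, (D x false + D x true) with hp
  have hq : ∑ x ∈ S, D x true = vtil * p := by
    rw [hvtil]; field_simp
  have key : (∑ x ∈ S, (D x false * ((0 - vtil)^2 - (0 - v)^2)
        + D x true * ((1 - vtil)^2 - (1 - v)^2)))
      = -(p * (v - vtil)^2) := by
    have expand : ∀ x ∈ S, D x false * ((0 - vtil)^2 - (0 - v)^2)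
        + D x true * ((1 - vtil)^2 - (1 - v)^2)
        = (D x false + D x true) * (vtil^2 - v^2) + D x true * (2*v - 2*vtil) := by
      intro x _; ring
    rw [Finset.sum_congr rfl expand, Finset.sum_add_distrib,
      ← Finset.sum_mul, ← Finset.sum_mul, hq, ← hp]
    ring
  refine ⟨key, fun hα => ?_⟩
  have hdiff : (∑ x, (D x false * (0 - ftil x)^2 + D x true * (1 - ftil x)^2))
      - (∑ x, (D x false * (0 - f x)^2 + D x true * (1 - f x)^2))
      = ∑ x ∈ S, (D x false * ((0 - vtil)^2 - (0 - v)^2)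
        + D x true * ((1 - vtil)^2 - (1 - v)^2)) := by
    rw [← Finset.sum_sub_distrib]
    rw [← Finset.sum_subset (Finset.subset_univ S)]
    · apply Finset.sum_congr rfl
      intro x hx
      obtain ⟨h1, h2⟩ := hon x hx
      rw [h1, h2]; ring
    · intro x _ hx
      rw [hoff x hx]; ring
  rw [hdiff, key]
  linarith
end
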